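/- arXiv:1208.3177 — 8 statements merged into one kernel-verified Lean document; each statement's English description precedes it below -/
import Mathlib

section
/- A finite group G is nilpotent if and only if [x,y] = 1 for all elements x, y in G of coprime orders. -/
section Helpers

universe u

variable {G : Type u} [Group G]

/-- Decomposition of an element of a finite group into its `p`-part and `p'`-part. -/
private lemma ppart_decomp [Finite G] {p : ℕ} (hp : p.Prime) (g : G) :
    ∃ a b : G, g = a * b ∧ a ∈ Subgroup.zpowers g ∧ b ∈ Subgroup.zpowers g ∧
      orderOf a ∣ p ^ (orderOf g).factorization p ∧
      orderOf b ∣ ordCompl[p] (orderOf g) ∧ Nat.Coprime p (orderOf b) := by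
  set n := orderOf g with hn
  have hn0 : n ≠ 0 := (orderOf_pos g).ne'
  set pk : ℕ := p ^ n.factorization p with hpk
  set m : ℕ := ordCompl[p] n with hm
  have hnm : pk * m = n := Nat.ordProj_mul_ordCompl_eq_self n p
  have hco : Nat.Coprime p m := Nat.coprime_ordCompl hp hn0
  have hgcd : Int.gcd (pk : ℤ) (m : ℤ) = 1 := by
    have h1 : Nat.Coprime pk m := Nat.Coprime.pow_left _ hco
    simpa [Int.gcd_natCast_natCast] using h1
  set A := Int.gcdA (pk : ℤ) (m : ℤ) with hA
  set B := Int.gcdB (pk : ℤ) (m : ℤ) with hB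
  have hbez : (1 : ℤ) = (pk : ℤ) * A + (m : ℤ) * B := by
    have h2 := Int.gcd_eq_gcd_ab (pk : ℤ) (m : ℤ)
    rw [hgcd] at h2
    simpa using h2
  have hdvd1 : (n : ℤ) ∣ ((m : ℤ) * B * (pk : ℤ)) := by
    refine ⟨B, ?_⟩
    rw [← hnm]
    push_cast
    ring
  have hdvd2 : (n : ℤ) ∣ ((pk : ℤ) * A * (m : ℤ)) := by
    refine ⟨A, ?_⟩
    rw [← hnm]
    push_cast
    ring
  have hoa : orderOf (g ^ ((m : ℤ) * B)) ∣ pk := by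
    apply orderOf_dvd_of_pow_eq_one
    rw [← zpow_natCast, ← zpow_mul]
    exact orderOf_dvd_iff_zpow_eq_one.mp (by rwa [← hn])
  have hob : orderOf (g ^ ((pk : ℤ) * A)) ∣ m := by
    apply orderOf_dvd_of_pow_eq_one
    rw [← zpow_natCast, ← zpow_mul]
    exact orderOf_dvd_iff_zpow_eq_one.mp (by rwa [← hn])
  refine ⟨g ^ ((m : ℤ) * B), g ^ ((pk : ℤ) * A), ?_, ⟨_, rfl⟩, ⟨_, rfl⟩, hoa, hob,
    hco.coprime_dvd_right hob⟩
  have hsum : (m : ℤ) * B + (pk : ℤ) * A = 1 := by linarith [hbez]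
  rw [← zpow_add, hsum, zpow_one]

/-- Reduction: to prove commutativity of all coprime-order pairs, it suffices to treat
elements of prime power order. -/
private lemma commute_of_coprime_aux [Finite G]
    (H : ∀ x y : G, IsPrimePow (orderOf x) → IsPrimePow (orderOf y) →
      Nat.Coprime (orderOf x) (orderOf y) → Commute x y) :
    ∀ x y : G, Nat.Coprime (orderOf x) (orderOf y) → Commute x y := by
  have key : ∀ n : ℕ, ∀ x y : G, orderOf x * orderOf y = n →
      Nat.Coprime (orderOf x) (orderOf y) → Commute x y := by
    intro n
    induction n using Nat.strong_induction_on with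
    | _ n ih =>
      intro x y hn hxy
      rcases eq_or_ne (orderOf x) 1 with h1 | h1
      · rw [orderOf_eq_one_iff] at h1
        subst h1
        exact Commute.one_left y
      rcases eq_or_ne (orderOf y) 1 with h2 | h2
      · rw [orderOf_eq_one_iff] at h2
        subst h2
        exact Commute.one_right x
      by_cases hpx : IsPrimePow (orderOf x)
      · by_cases hpy : IsPrimePow (orderOf y)
        · exact H x y hpx hpy hxy
        · -- split y
          obtain ⟨p, hp, hpd⟩ := Nat.exists_prime_and_dvd h2
          obtain ⟨a, b, hab, hamem, hbmem, hda, hdb, _⟩ := ppart_decomp hp y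
          have hk1 : 1 ≤ (orderOf y).factorization p :=
            (Nat.Prime.factorization_pos_of_dvd hp (orderOf_pos y).ne' hpd)
          have hpklt : p ^ (orderOf y).factorization p < orderOf y := by
            rcases lt_or_eq_of_le (Nat.le_of_dvd (orderOf_pos y) (Nat.ordProj_dvd _ _)) with
              h | h
            · exact h
            · exact absurd ⟨p, _, Nat.prime_iff.mp hp, hk1, h⟩ hpy
          have hmlt : ordCompl[p] (orderOf y) < orderOf y :=
            Nat.div_lt_self (orderOf_pos y) (Nat.one_lt_pow (by omega) hp.one_lt)
          have hda' : orderOf a ∣ orderOf y := orderOf_dvd_of_mem_zpowers hamem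
          have hdb' : orderOf b ∣ orderOf y := orderOf_dvd_of_mem_zpowers hbmem
          have ca : Commute x a := by
            refine ih (orderOf x * orderOf a) ?_ x a rfl (hxy.coprime_dvd_right hda')
            calc orderOf x * orderOf a ≤ orderOf x * (p ^ (orderOf y).factorization p) :=
                  Nat.mul_le_mul_left _ (Nat.le_of_dvd (pow_pos hp.pos _) hda)
              _ < orderOf x * orderOf y := by
                  exact mul_lt_mul_of_pos_left hpklt (orderOf_pos x)
              _ = n := hn
          have cb : Commute x b := by
            refine ih (orderOf x * orderOf b) ?_ x b rfl (hxy.coprime_dvd_right hdb')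
            calc orderOf x * orderOf b ≤ orderOf x * ordCompl[p] (orderOf y) :=
                  Nat.mul_le_mul_left _ (Nat.le_of_dvd (Nat.ordCompl_pos p (orderOf_pos y).ne')
                    hdb)
              _ < orderOf x * orderOf y := mul_lt_mul_of_pos_left hmlt (orderOf_pos x)
              _ = n := hn
          rw [hab]
          exact ca.mul_right cb
      · -- split x
        obtain ⟨p, hp, hpd⟩ := Nat.exists_prime_and_dvd h1
        obtain ⟨a, b, hab, hamem, hbmem, hda, hdb, _⟩ := ppart_decomp hp x
        have hk1 : 1 ≤ (orderOf x).factorization p :=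
          (Nat.Prime.factorization_pos_of_dvd hp (orderOf_pos x).ne' hpd)
        have hpklt : p ^ (orderOf x).factorization p < orderOf x := by
          rcases lt_or_eq_of_le (Nat.le_of_dvd (orderOf_pos x) (Nat.ordProj_dvd _ _)) with
            h | h
          · exact h
          · exact absurd ⟨p, _, Nat.prime_iff.mp hp, hk1, h⟩ hpx
        have hmlt : ordCompl[p] (orderOf x) < orderOf x :=
          Nat.div_lt_self (orderOf_pos x) (Nat.one_lt_pow (by omega) hp.one_lt)
        have hda' : orderOf a ∣ orderOf x := orderOf_dvd_of_mem_zpowers hamem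
        have hdb' : orderOf b ∣ orderOf x := orderOf_dvd_of_mem_zpowers hbmem
        have ca : Commute a y := by
          refine ih (orderOf a * orderOf y) ?_ a y rfl (hxy.coprime_dvd_left hda')
          calc orderOf a * orderOf y ≤ (p ^ (orderOf x).factorization p) * orderOf y :=
                Nat.mul_le_mul_right _ (Nat.le_of_dvd (pow_pos hp.pos _) hda)
            _ < orderOf x * orderOf y := mul_lt_mul_of_pos_right hpklt (orderOf_pos y)
            _ = n := hn
        have cb : Commute b y := by
          refine ih (orderOf b * orderOf y) ?_ b y rfl (hxy.coprime_dvd_left hdb')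
          calc orderOf b * orderOf y ≤ ordCompl[p] (orderOf x) * orderOf y :=
                Nat.mul_le_mul_right _ (Nat.le_of_dvd (Nat.ordCompl_pos p (orderOf_pos x).ne')
                  hdb)
            _ < orderOf x * orderOf y := mul_lt_mul_of_pos_right hmlt (orderOf_pos y)
            _ = n := hn
        rw [hab]
        exact ca.mul_left cb
  exact fun x y h => key _ x y rfl h

/-- In a nilpotent finite group, elements of coprime orders commute. -/
private lemma commute_of_nilpotent [Finite G] (h : Group.IsNilpotent G)
    (x y : G) (hxy : Nat.Coprime (orderOf x) (orderOf y)) : Commute x y := by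
  revert x y hxy
  apply commute_of_coprime_aux
  intro x y hpx hpy hxy
  obtain ⟨p, k, hp, hk, hpk⟩ := hpx
  obtain ⟨q, l, hq, hl, hql⟩ := hpy
  have hp' : p.Prime := Nat.prime_iff.mpr hp
  have hq' : q.Prime := Nat.prime_iff.mpr hq
  haveI := Fact.mk hp'
  haveI := Fact.mk hq'
  have hne : p ≠ q := by
    rintro rfl
    have h1 : p ∣ orderOf x := hpk ▸ dvd_pow_self p hk.ne'
    have h2 : p ∣ orderOf y := hql ▸ dvd_pow_self p hl.ne'
    have h3 : p ∣ 1 := hxy ▸ Nat.dvd_gcd h1 h2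
    exact hp'.one_lt.ne' (Nat.dvd_one.mp h3)
  have hx : IsPGroup p (Subgroup.zpowers x) := by
    rw [IsPGroup.iff_orderOf]
    intro g
    have hg : orderOf (g : G) ∣ p ^ k := by
      rw [hpk]
      exact orderOf_dvd_of_mem_zpowers g.2
    obtain ⟨i, _, hi⟩ := (Nat.dvd_prime_pow hp').mp hg
    exact ⟨i, by rw [← Subgroup.orderOf_coe, hi]⟩
  have hy : IsPGroup q (Subgroup.zpowers y) := by
    rw [IsPGroup.iff_orderOf]
    intro g
    have hg : orderOf (g : G) ∣ q ^ l := by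
      rw [hql]
      exact orderOf_dvd_of_mem_zpowers g.2
    obtain ⟨i, _, hi⟩ := (Nat.dvd_prime_pow hq').mp hg
    exact ⟨i, by rw [← Subgroup.orderOf_coe, hi]⟩
  obtain ⟨P, hxP⟩ := hx.exists_le_sylow
  obtain ⟨R, hyR⟩ := hy.exists_le_sylow
  have hnorm := ((isNilpotent_of_finite_tfae (G := G)).out 0 3).mp h
  exact Subgroup.commute_of_normal_of_disjoint P R (hnorm p ⟨hp'⟩ P) (hnorm q ⟨hq'⟩ R)
    (IsPGroup.disjoint_of_ne p q hne _ _ P.isPGroup' R.isPGroup')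
    x y (hxP (Subgroup.mem_zpowers x)) (hyR (Subgroup.mem_zpowers y))

/-- The coprime-commutator hypothesis passes to quotients. -/
private lemma hyp_quotient [Finite G] (N : Subgroup G) [N.Normal]
    (h : ∀ x y : G, Nat.Coprime (orderOf x) (orderOf y) → Commute x y) :
    ∀ x y : G ⧸ N, Nat.Coprime (orderOf x) (orderOf y) → Commute x y := by
  have lift : ∀ (p : ℕ), p.Prime → ∀ z : G ⧸ N, (∃ j, orderOf z = p ^ j) →
      ∃ a : G, (∃ i, orderOf a = p ^ i) ∧ (QuotientGroup.mk' N) a = z := by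
    intro p hp z hz
    obtain ⟨j, hj⟩ := hz
    obtain ⟨g, rfl⟩ := QuotientGroup.mk'_surjective N z
    obtain ⟨a, b, hab, hamem, hbmem, hda, _, hdb⟩ := ppart_decomp hp g
    subst hab
    have hcomm : Commute ((QuotientGroup.mk' N) a) ((QuotientGroup.mk' N) b) := by
      obtain ⟨i, hi⟩ := Subgroup.mem_zpowers_iff.mp hamem
      obtain ⟨i', hi'⟩ := Subgroup.mem_zpowers_iff.mp hbmem
      have h1 : Commute ((a * b) ^ (i : ℤ)) ((a * b) ^ (i' : ℤ)) :=
        (Commute.refl _).zpow_zpow i i'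
      rw [hi, hi'] at h1
      exact h1.map (QuotientGroup.mk' N)
    have hoa : orderOf ((QuotientGroup.mk' N) a) ∣ p ^ (orderOf (a * b)).factorization p :=
      (orderOf_map_dvd _ a).trans hda
    have hob : Nat.Coprime p (orderOf ((QuotientGroup.mk' N) b)) :=
      hdb.coprime_dvd_right (orderOf_map_dvd _ b)
    have hcop : Nat.Coprime (orderOf ((QuotientGroup.mk' N) a))
        (orderOf ((QuotientGroup.mk' N) b)) :=
      Nat.Coprime.coprime_dvd_left hoa (Nat.Coprime.pow_left _ hob)
    have hmul : orderOf ((QuotientGroup.mk' N) (a * b)) =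
        orderOf ((QuotientGroup.mk' N) a) * orderOf ((QuotientGroup.mk' N) b) := by
      rw [map_mul]
      exact hcomm.orderOf_mul_eq_mul_orderOf_of_coprime hcop
    have hbdvd : orderOf ((QuotientGroup.mk' N) b) ∣ p ^ j := by
      rw [← hj, hmul]
      exact Dvd.intro_left _ rfl
    have hb1 : orderOf ((QuotientGroup.mk' N) b) = 1 :=
      Nat.Coprime.eq_one_of_dvd ((hob.symm).pow_right j) hbdvd
    have hbone : (QuotientGroup.mk' N) b = 1 := orderOf_eq_one_iff.mp hb1
    obtain ⟨i, _, hi⟩ := (Nat.dvd_prime_pow hp).mp hda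
    exact ⟨a, ⟨i, hi⟩, by rw [map_mul, hbone, mul_one]⟩
  apply commute_of_coprime_aux
  intro x y hpx hpy hxy
  obtain ⟨p, k, hp, hk, hpk⟩ := hpx
  obtain ⟨q, l, hq, hl, hql⟩ := hpy
  have hp' : p.Prime := Nat.prime_iff.mpr hp
  have hq' : q.Prime := Nat.prime_iff.mpr hq
  have hne : p ≠ q := by
    rintro rfl
    have h1 : p ∣ orderOf x := hpk ▸ dvd_pow_self p hk.ne'
    have h2 : p ∣ orderOf y := hql ▸ dvd_pow_self p hl.ne'
    have h3 : p ∣ 1 := hxy ▸ Nat.dvd_gcd h1 h2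
    exact hp'.one_lt.ne' (Nat.dvd_one.mp h3)
  obtain ⟨a, ⟨i, hi⟩, rfl⟩ := lift p hp' x ⟨k, hpk.symm⟩
  obtain ⟨c, ⟨j, hj⟩, rfl⟩ := lift q hq' y ⟨l, hql.symm⟩
  have hac : Commute a c := by
    apply h a c
    rw [hi, hj]
    exact ((Nat.coprime_primes hp' hq').mpr hne).pow i j
  exact hac.map (QuotientGroup.mk' N)

/-- Main auxiliary induction: the coprime-commutator condition implies nilpotency. -/
private lemma nilpotent_of_coprime_commute :
    ∀ (n : ℕ) (G : Type u) [Group G] [Finite G], Nat.card G ≤ n →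
      (∀ x y : G, Nat.Coprime (orderOf x) (orderOf y) → Commute x y) →
      Group.IsNilpotent G := by
  intro n
  induction n with
  | zero =>
    intro G _ _ hle _
    have := Nat.card_pos (α := G)
    omega
  | succ n ih =>
    intro G _ _ hle hyp
    by_cases hpp : ∃ p k : ℕ, p.Prime ∧ Nat.card G = p ^ k
    · obtain ⟨p, k, hp, hcard⟩ := hpp
      haveI := Fact.mk hp
      exact (IsPGroup.of_card hcard).isNilpotent
    · have hG0 : Nat.card G ≠ 0 := Nat.card_pos.ne'
      have hG1 : Nat.card G ≠ 1 := fun h => hpp ⟨2, 0, Nat.prime_two, by simp [h]⟩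
      obtain ⟨p, hp, hpd⟩ := Nat.exists_prime_and_dvd hG1
      have hm1 : ordCompl[p] (Nat.card G) ≠ 1 := by
        intro h
        exact hpp ⟨p, (Nat.card G).factorization p, hp, by
          conv_lhs => rw [← Nat.ordProj_mul_ordCompl_eq_self (Nat.card G) p]
          rw [h, mul_one]⟩
      obtain ⟨q, hq, hqd⟩ := Nat.exists_prime_and_dvd hm1
      have hqd' : q ∣ Nat.card G := hqd.trans (Nat.ordCompl_dvd _ _)
      have hpq : p ≠ q := by
        rintro rfl
        exact Nat.not_dvd_ordCompl hp hG0 hqd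
      set Sp : Set G := {g | ∃ k : ℕ, orderOf g = p ^ k} with hSp
      set Sc : Set G := {g | ¬ p ∣ orderOf g} with hSc
      set Q := Subgroup.closure Sp with hQ
      set K := Subgroup.closure Sc with hK
      have hcomm : ∀ a ∈ Sp, ∀ b ∈ Sc, Commute a b := by
        rintro a ⟨k, hk⟩ b hb
        exact hyp a b (by
          rw [hk]
          exact Nat.Coprime.pow_left k ((Nat.Prime.coprime_iff_not_dvd hp).mpr hb))
      have hKc : K ≤ Subgroup.centralizer Sp := by
        rw [hK, Subgroup.closure_le]
        intro b hb
        rw [SetLike.mem_coe, Subgroup.mem_centralizer_iff]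
        intro a ha
        exact hcomm a ha b hb
      have hQc : Q ≤ Subgroup.centralizer (K : Set G) := by
        rw [hQ, Subgroup.closure_le]
        intro a ha
        rw [SetLike.mem_coe, Subgroup.mem_centralizer_iff]
        intro x hx
        exact (Subgroup.mem_centralizer_iff.mp (hKc hx) a ha).symm
      have hQK : ∀ x : G, x ∈ Q → ∀ y : G, y ∈ K → Commute x y := by
        intro x hx y hy
        exact (Subgroup.mem_centralizer_iff.mp (hQc hx) y hy).symm
      have hdecomp : ∀ g : G, ∃ a b : G, a ∈ Q ∧ b ∈ K ∧ g = a * b := by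
        intro g
        obtain ⟨a, b, hab, _, _, hda, _, hdb⟩ := ppart_decomp hp g
        obtain ⟨i, _, hi⟩ := (Nat.dvd_prime_pow hp).mp hda
        exact ⟨a, b, Subgroup.subset_closure ⟨i, hi⟩,
          Subgroup.subset_closure ((Nat.Prime.coprime_iff_not_dvd hp).mp hdb), hab⟩
      by_cases htop : Q = ⊤ ∨ K = ⊤
      · -- the center is nontrivial; use the quotient by the center
        have hcent : ∃ z : G, z ∈ Subgroup.center G ∧ z ≠ 1 := by
          cases htop with
          | inl hQt =>
            haveI := Fact.mk hq
            obtain ⟨z, hz⟩ := exists_prime_orderOf_dvd_card' q hqd'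
            have hzK : z ∈ K := Subgroup.subset_closure (by
              show ¬ p ∣ orderOf z
              rw [hz]
              intro hd
              exact hpq ((Nat.prime_dvd_prime_iff_eq hp hq).mp hd))
            refine ⟨z, ?_, ?_⟩
            · rw [Subgroup.mem_center_iff]
              intro g
              exact hQK g (hQt ▸ Subgroup.mem_top g) z hzK
            · intro h
              rw [h, orderOf_one] at hz
              exact hq.ne_one hz.symm
          | inr hKt =>
            haveI := Fact.mk hp
            obtain ⟨z, hz⟩ := exists_prime_orderOf_dvd_card' p hpd
            have hzQ : z ∈ Q := Subgroup.subset_closure ⟨1, by rw [hz, pow_one]⟩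
            refine ⟨z, ?_, ?_⟩
            · rw [Subgroup.mem_center_iff]
              intro g
              exact (hQK z hzQ g (hKt ▸ Subgroup.mem_top g)).symm
            · intro h
              rw [h, orderOf_one] at hz
              exact hp.ne_one hz.symm
        obtain ⟨z, hzc, hz1⟩ := hcent
        have h2 : 2 ≤ Nat.card (Subgroup.center G) := by
          have : Nontrivial (Subgroup.center G) :=
            ⟨⟨⟨z, hzc⟩, 1, fun h => hz1 (by simpa using congrArg Subtype.val h)⟩⟩
          exact Finite.one_lt_card_iff_nontrivial.mpr this
        have heq := Subgroup.card_eq_card_quotient_mul_card_subgroup (Subgroup.center G)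
        have hlt : Nat.card (G ⧸ Subgroup.center G) < Nat.card G := by
          have hq0 : 0 < Nat.card (G ⧸ Subgroup.center G) := Nat.card_pos
          calc Nat.card (G ⧸ Subgroup.center G)
              < Nat.card (G ⧸ Subgroup.center G) * 2 := by omega
            _ ≤ Nat.card (G ⧸ Subgroup.center G) * Nat.card (Subgroup.center G) :=
                Nat.mul_le_mul_left _ h2
            _ = Nat.card G := heq.symm
        have hnilq := ih (G ⧸ Subgroup.center G) (by omega)
          (hyp_quotient (Subgroup.center G) hyp)
        exact of_quotient_center_nilpotent hnilq
      · push_neg at htop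
        obtain ⟨hQt, hKt⟩ := htop
        have hQlt : Nat.card Q < Nat.card G :=
          lt_of_le_of_ne (Subgroup.card_le_card_group Q)
            (fun h => hQt (Subgroup.eq_top_of_card_eq Q h))
        have hKlt : Nat.card K < Nat.card G :=
          lt_of_le_of_ne (Subgroup.card_le_card_group K)
            (fun h => hKt (Subgroup.eq_top_of_card_eq K h))
        have hypQ : ∀ x y : Q, Nat.Coprime (orderOf x) (orderOf y) → Commute x y := by
          intro x y hxy
          have hxy' : Nat.Coprime (orderOf (x : G)) (orderOf (y : G)) := by
            rwa [Subgroup.orderOf_coe, Subgroup.orderOf_coe]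
          exact Subtype.ext (hyp (x : G) (y : G) hxy')
        have hypK : ∀ x y : K, Nat.Coprime (orderOf x) (orderOf y) → Commute x y := by
          intro x y hxy
          have hxy' : Nat.Coprime (orderOf (x : G)) (orderOf (y : G)) := by
            rwa [Subgroup.orderOf_coe, Subgroup.orderOf_coe]
          exact Subtype.ext (hyp (x : G) (y : G) hxy')
        haveI nQ : Group.IsNilpotent Q := ih Q (by omega) hypQ
        haveI nK : Group.IsNilpotent K := ih K (by omega) hypK
        set f := MonoidHom.noncommCoprod Q.subtype K.subtype
          (fun a b => hQK (a : G) a.2 (b : G) b.2) with hf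
        have hfs : Function.Surjective f := by
          intro g
          obtain ⟨a, b, ha, hb, rfl⟩ := hdecomp g
          exact ⟨(⟨a, ha⟩, ⟨b, hb⟩), rfl⟩
        exact nilpotent_of_surjective f hfs

end Helpers

/-- A finite group `G` is nilpotent iff commutators of elements of coprime orders
are trivial. -/
theorem nilpotent_iff_coprime_commutators (G : Type*) [Group G] [Finite G] :
    Group.IsNilpotent G ↔
      ∀ x y : G, Nat.Coprime (orderOf x) (orderOf y) → x⁻¹ * y⁻¹ * x * y = 1 := by
  constructor
  · intro h x y hxy
    have hc := commute_of_nilpotent h x y hxy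
    rw [show x⁻¹ * y⁻¹ * x * y = (y * x)⁻¹ * (x * y) by group, inv_mul_eq_one]
    exact hc.symm
  · intro h
    apply nilpotent_of_coprime_commute (Nat.card G) G le_rfl
    intro x y hxy
    have hc := h x y hxy
    rw [show x⁻¹ * y⁻¹ * x * y = (y * x)⁻¹ * (x * y) by group, inv_mul_eq_one] at hc
    exact hc.symm
end

section
/- If α is an automorphism of a finite group G with gcd(|α|, |G|) = 1, then G = [G,α] · C_G(α), where [G,α] is the subgroup generated by all elements g⁻¹·α(g) and C_G(α) is the fixed-point subgroup of α. -/
open Subgroup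

private abbrev commSet {G : Type*} [Group G] (α : MulAut G) : Set G :=
  {z : G | ∃ g' : G, z = g'⁻¹ * α g'}

private lemma commSet_apply_mem {G : Type*} [Group G] (α : MulAut G) {x : G}
    (hx : x ∈ closure (commSet α)) : α x ∈ closure (commSet α) := by
  induction hx using closure_induction with
  | mem z hz =>
    obtain ⟨a, rfl⟩ := hz
    have : α (a⁻¹ * α a) = (α a)⁻¹ * α (α a) := by rw [map_mul, map_inv]
    rw [this]
    exact subset_closure ⟨α a, rfl⟩
  | one => simpa using one_mem _
  | mul x y hx hy ihx ihy => rw [map_mul]; exact mul_mem ihx ihy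
  | inv x hx ihx => rw [map_inv]; exact inv_mem ihx

private lemma commSet_telescope {G : Type*} [Group G] (α : MulAut G) (k : ℕ) (g : G) :
    g⁻¹ * (α ^ k) g ∈ closure (commSet α) := by
  induction k with
  | zero => simpa using one_mem _
  | succ k ih =>
    have h1 : (α ^ (k + 1)) g = α ((α ^ k) g) := by
      rw [pow_succ', MulAut.mul_apply]
    have h2 : g⁻¹ * (α ^ (k + 1)) g
        = (g⁻¹ * (α ^ k) g) * (((α ^ k) g)⁻¹ * α ((α ^ k) g)) := by
      rw [h1]; group
    rw [h2]
    exact mul_mem ih (subset_closure ⟨(α ^ k) g, rfl⟩)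

/-- The fixed-point subgroup of an automorphism. -/
private def fixedSub {G : Type*} [Group G] (β : MulAut G) : Subgroup G where
  carrier := {x | β x = x}
  one_mem' := map_one β
  mul_mem' := by
    intro a b ha hb
    simp only [Set.mem_setOf_eq] at *
    rw [map_mul, ha, hb]
  inv_mem' := by
    intro a ha
    simp only [Set.mem_setOf_eq] at *
    rw [map_inv, ha]

private theorem aux : ∀ (n : ℕ) (G : Type u) [Group G] [Finite G] (α : MulAut G),
    orderOf α = n → Nat.Coprime n (Nat.card G) →
    ∀ g : G, ∃ h ∈ closure (commSet α), ∃ c : G, α c = c ∧ g = h * c := by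
  intro n
  induction n using Nat.strong_induction_on with
  | _ n IH =>
  intro G _ _ α hn hcop g
  rcases Nat.lt_or_ge n 2 with hsmall | hbig
  · interval_cases n
    · -- n = 0 : card G = 1
      have h1 : Nat.card G = 1 := Nat.coprime_zero_left _ |>.mp hcop
      have : Subsingleton G := (Nat.card_eq_one_iff_unique.mp h1).1
      exact ⟨1, one_mem _, g, Subsingleton.elim _ _, (one_mul g).symm⟩
    · -- n = 1 : α = 1
      have : α = 1 := orderOf_eq_one_iff.mp hn
      exact ⟨1, one_mem _, g, by rw [this]; rfl, (one_mul g).symm⟩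
  · -- n ≥ 2
    set p := n.minFac with hp_def
    have hp : p.Prime := Nat.minFac_prime (by omega)
    have hpdvd : p ∣ n := Nat.minFac_dvd n
    set m := n / p with hm_def
    have hmlt : m < n := Nat.div_lt_self (by omega) hp.one_lt
    have hmdvd : m ∣ n := Nat.div_dvd_of_dvd hpdvd
    have hβord : orderOf (α ^ p) = m := by
      rw [orderOf_pow, hn, Nat.gcd_eq_right hpdvd]
    have hmcop : Nat.Coprime m (Nat.card G) := Nat.Coprime.coprime_dvd_left hmdvd hcop
    obtain ⟨h, hhmem, c, hc, hgc⟩ := IH m hmlt G (α ^ p) hβord hmcop g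
    -- h ∈ closure (commSet α)
    have hsub : closure (commSet (α ^ p)) ≤ closure (commSet α) := by
      rw [closure_le]
      rintro z ⟨a, rfl⟩
      exact commSet_telescope α p a
    have hhmem' : h ∈ closure (commSet α) := hsub hhmem
    -- now find an α-fixed point in (closure (commSet α)) * c ∩ fixedSub (α^p)
    set N := closure (commSet α) with hN
    set S := {x : G // x * c⁻¹ ∈ N ∧ (α ^ p) x = x} with hS
    have hαpcomm : ∀ x : G, (α ^ p) (α x) = α ((α ^ p) x) := by
      intro x
      rw [← MulAut.mul_apply, ← MulAut.mul_apply, ← pow_succ, ← pow_succ']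
    have hmapS : ∀ x : S, α (x : G) * c⁻¹ ∈ N ∧ (α ^ p) (α (x : G)) = α (x : G) := by
      intro xx
      obtain ⟨x, hx1, hx2⟩ := xx
      show α x * c⁻¹ ∈ N ∧ (α ^ p) (α x) = α x
      constructor
      · have key : α x * c⁻¹ = α (x * c⁻¹) * (α c * c⁻¹) := by
          rw [map_mul, map_inv]; group
        have h2 : α c * c⁻¹ ∈ N := by
          have : α c * c⁻¹ = ((c⁻¹)⁻¹ * α c⁻¹)⁻¹ := by
            rw [map_inv]; group
          rw [this]
          exact inv_mem (subset_closure ⟨c⁻¹, rfl⟩)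
        rw [key]
        exact mul_mem (commSet_apply_mem α hx1) h2
      · rw [hαpcomm, hx2]
    let f : S → S := fun x => ⟨α (x : G), hmapS x⟩
    have hfinj : Function.Injective f := by
      intro a b hab
      have : α (a : G) = α (b : G) := congrArg Subtype.val hab
      exact Subtype.ext (α.injective this)
    have hfbij : Function.Bijective f := Finite.injective_iff_bijective.mp hfinj
    let σ : Equiv.Perm S := Equiv.ofBijective f hfbij
    have hσval : ∀ (k : ℕ) (x : S), ((σ ^ k) x : G) = (α ^ k) (x : G) := by
      intro k
      induction k with
      | zero => intro x; simp
      | succ k ih =>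
        intro x
        rw [pow_succ, Equiv.Perm.mul_apply, ih]
        show ((α : MulAut G) ^ k) (α (x : G)) = (α ^ (k + 1)) (x : G)
        rw [← MulAut.mul_apply, ← pow_succ]
    have hσp : σ ^ p ^ 1 = 1 := by
      rw [pow_one]
      ext x
      rw [Equiv.Perm.one_apply]
      exact (hσval p x).trans x.2.2
    -- cardinality
    have hcS : c ∈ {x : G | x * c⁻¹ ∈ N ∧ (α ^ p) x = x} := ⟨by simpa using one_mem N, hc⟩
    haveI : Nonempty S := ⟨⟨c, hcS⟩⟩
    haveI : Fintype S := Fintype.ofFinite S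
    set K := N ⊓ fixedSub (α ^ p) with hK
    have e : S ≃ K :=
      { toFun := fun x => ⟨(x : G) * c⁻¹, mem_inf.mpr ⟨x.2.1, by
          show (α ^ p) ((x : G) * c⁻¹) = (x : G) * c⁻¹
          rw [map_mul, map_inv, x.2.2, hc]⟩⟩
        invFun := fun y => ⟨(y : G) * c, by
          constructor
          · simpa using (mem_inf.mp y.2).1
          · have hy2 : (α ^ p) (y : G) = (y : G) := (mem_inf.mp y.2).2
            rw [map_mul, hy2, hc]⟩
        left_inv := fun x => Subtype.ext (by group)
        right_inv := fun y => Subtype.ext (by group) }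
    have hpG : ¬ p ∣ Nat.card G := by
      intro hd
      have hpc : Nat.Coprime p (Nat.card G) := Nat.Coprime.coprime_dvd_left hpdvd hcop
      exact hp.ne_one (Nat.eq_one_of_dvd_one (hpc ▸ Nat.dvd_gcd dvd_rfl hd))
    have hcard : ¬ p ∣ Fintype.card S := by
      intro hd
      apply hpG
      have h1 : Nat.card K ∣ Nat.card G := K.card_subgroup_dvd_card
      have h2 : Nat.card S = Nat.card K := Nat.card_congr e
      rw [Nat.card_eq_fintype_card] at h2
      exact dvd_trans (h2 ▸ hd) h1
    haveI : Fact p.Prime := ⟨hp⟩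
    obtain ⟨a, ha⟩ := Equiv.Perm.exists_fixed_point_of_prime hcard hσp
    -- a is fixed by α
    have hafix : α (a : G) = (a : G) := congrArg Subtype.val ha
    refine ⟨h * ((a : G) * c⁻¹)⁻¹, mul_mem hhmem' (inv_mem a.2.1), (a : G), hafix, ?_⟩
    rw [hgc]; group

/-- If `α` is an automorphism of a finite group `G` with `gcd(|α|,|G|) = 1`, then
`G = [G,α] · C_G(α)`. -/
theorem coprime_automorphism_decomposition (G : Type*) [Group G] [Finite G]
    (α : MulAut G) (hcop : Nat.Coprime (orderOf α) (Nat.card G)) :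
    ∀ g : G, ∃ h ∈ Subgroup.closure {z : G | ∃ g' : G, z = g'⁻¹ * α g'},
      ∃ c : G, α c = c ∧ g = h * c := by
  exact aux (orderOf α) G α rfl hcop
end

section
/- Let G be a finite group, M an abelian normal subgroup of G, and x an element of G such that G = M⟨x⟩ and M = [M,x]. Then every element of M can be written in the form [m,x] for some m ∈ M. -/
/-- If `M` is an abelian normal subgroup of a finite group `G`, `x ∈ G`,
`G = M⟨x⟩` and `M = [M,x]`, then every element of `M` has the form `[m,x]`. -/
theorem abelian_normal_commutator_surjective (G : Type*) [Group G] [Finite G]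
    (M : Subgroup G) (hnorm : M.Normal)
    (habel : ∀ a ∈ M, ∀ b ∈ M, a * b = b * a) (x : G)
    (htop : M ⊔ Subgroup.zpowers x = ⊤)
    (hMx : Subgroup.closure {c : G | ∃ m ∈ M, c = m⁻¹ * x⁻¹ * m * x} = M) :
    ∀ g ∈ M, ∃ m ∈ M, g = m⁻¹ * x⁻¹ * m * x := by
  have hconj : ∀ m ∈ M, x⁻¹ * m * x ∈ M := by
    intro m hm
    have := hnorm.conj_mem m hm x⁻¹
    simpa [mul_assoc] using this
  let S : Subgroup G :=
  { carrier := {c : G | ∃ m ∈ M, c = m⁻¹ * x⁻¹ * m * x}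
    one_mem' := ⟨1, M.one_mem, by group⟩
    mul_mem' := by
      rintro a b ⟨m, hm, rfl⟩ ⟨n, hn, rfl⟩
      refine ⟨m * n, M.mul_mem hm hn, ?_⟩
      have key : (x⁻¹ * m * x) * n⁻¹ = n⁻¹ * (x⁻¹ * m * x) :=
        habel _ (hconj m hm) _ (M.inv_mem hn)
      have c2 : m⁻¹ * n⁻¹ = n⁻¹ * m⁻¹ := habel _ (M.inv_mem hm) _ (M.inv_mem hn)
      calc m⁻¹ * x⁻¹ * m * x * (n⁻¹ * x⁻¹ * n * x)
          = m⁻¹ * ((x⁻¹ * m * x) * n⁻¹) * (x⁻¹ * n * x) := by group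
        _ = m⁻¹ * (n⁻¹ * (x⁻¹ * m * x)) * (x⁻¹ * n * x) := by rw [key]
        _ = (m⁻¹ * n⁻¹) * (x⁻¹ * m * x * (x⁻¹ * n * x)) := by group
        _ = (n⁻¹ * m⁻¹) * (x⁻¹ * m * x * (x⁻¹ * n * x)) := by rw [c2]
        _ = (m * n)⁻¹ * x⁻¹ * (m * n) * x := by group
    inv_mem' := by
      rintro a ⟨m, hm, rfl⟩
      refine ⟨m⁻¹, M.inv_mem hm, ?_⟩
      have key : m * (x⁻¹ * m⁻¹ * x) = (x⁻¹ * m⁻¹ * x) * m :=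
        habel _ hm _ (hconj _ (M.inv_mem hm))
      calc (m⁻¹ * x⁻¹ * m * x)⁻¹
          = (x⁻¹ * m⁻¹ * x) * m := by group
        _ = m * (x⁻¹ * m⁻¹ * x) := (key.symm)
        _ = (m⁻¹)⁻¹ * x⁻¹ * m⁻¹ * x := by group }
  have hle : M ≤ S := by
    rw [← hMx]
    exact (Subgroup.closure_le S).mpr (fun c hc => hc)
  intro g hg
  exact hle hg
end

section
/- Let G be a finite group, M an abelian normal subgroup of G, and x ∈ G with M = [M,x]. Then for every positive integer l, every element of M can be written as an iterated commutator [m,x,x,…,x] (with x repeated l times) for a suitable m ∈ M. -/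
/-- If `M` is an abelian normal subgroup of a finite group `G`, `x ∈ G` and
`M = [M,x]`, then for every `l ≥ 1` every element of `M` is an iterated
commutator `[m,x,…,x]` (`x` repeated `l` times) for a suitable `m ∈ M`. -/
theorem abelian_normal_iterated_commutator_surjective (G : Type*) [Group G] [Finite G]
    (M : Subgroup G) (hnorm : M.Normal)
    (habel : ∀ a ∈ M, ∀ b ∈ M, a * b = b * a) (x : G)
    (hMx : Subgroup.closure {c : G | ∃ m ∈ M, c = m⁻¹ * x⁻¹ * m * x} = M) :
    ∀ l : ℕ, 1 ≤ l → ∀ g ∈ M, ∃ m ∈ M,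
      g = (fun z : G => z⁻¹ * x⁻¹ * z * x)^[l] m := by
  -- the commutator map lands in M
  have hmem : ∀ m ∈ M, m⁻¹ * x⁻¹ * m * x ∈ M := by
    intro m hm
    have h1 : x⁻¹ * m * x ∈ M := by
      have := hnorm.conj_mem m hm x⁻¹
      simpa [mul_assoc] using this
    have := M.mul_mem (M.inv_mem hm) h1
    simpa [mul_assoc] using this
  -- define f : M →* M
  let f : ↥M →* ↥M :=
    { toFun := fun m => ⟨(m : G)⁻¹ * x⁻¹ * m * x, hmem m m.2⟩
      map_one' := by ext; simp
      map_mul' := by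
        intro a b
        ext
        show ((a : G) * b)⁻¹ * x⁻¹ * (a * b) * x =
          ((a : G)⁻¹ * x⁻¹ * a * x) * ((b : G)⁻¹ * x⁻¹ * b * x)
        have hc : Commute ((b : G)) ((a : G)⁻¹ * x⁻¹ * a * x) :=
          habel _ b.2 _ (hmem a a.2)
        have hc2 : (b : G)⁻¹ * ((a : G)⁻¹ * x⁻¹ * a * x) =
            ((a : G)⁻¹ * x⁻¹ * a * x) * (b : G)⁻¹ := hc.inv_left.eq
        have h3 : ((a : G) * b)⁻¹ * x⁻¹ * (a * b) * x =
            ((b : G)⁻¹ * ((a : G)⁻¹ * x⁻¹ * a * x)) * ((x⁻¹ * b) * x) := by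
          group
        rw [h3, hc2]
        group }
  -- f is surjective
  have hsurj : Function.Surjective f := by
    intro g
    have hsub : {c : G | ∃ m ∈ M, c = m⁻¹ * x⁻¹ * m * x} ⊆
        (Subgroup.map M.subtype f.range : Set G) := by
      rintro c ⟨m, hm, rfl⟩
      exact ⟨⟨_, hmem m hm⟩, ⟨⟨m, hm⟩, rfl⟩, rfl⟩
    have hg : (g : G) ∈ Subgroup.map M.subtype f.range :=
      (Subgroup.closure_le _).2 hsub (hMx.symm.le g.2)
    obtain ⟨n, ⟨m0, rfl⟩, hnv⟩ := hg
    exact ⟨m0, Subtype.ext hnv⟩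
  -- induction on l
  intro l hl
  induction l with
  | zero => omega
  | succ l ih =>
    intro g hg
    rcases Nat.eq_zero_or_pos l with rfl | hpos
    · obtain ⟨m, hm⟩ := hsurj ⟨g, hg⟩
      refine ⟨m, m.2, ?_⟩
      have : ((f m : G)) = g := congrArg Subtype.val hm
      simpa [f] using this.symm
    · obtain ⟨m1, hm1, hgm1⟩ := ih hpos g hg
      obtain ⟨m, hm⟩ := hsurj ⟨m1, hm1⟩
      refine ⟨m, m.2, ?_⟩
      have hfm : (m : G)⁻¹ * x⁻¹ * m * x = m1 := congrArg Subtype.val hm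
      rw [hgm1, Function.iterate_succ_apply]
      simp [hfm]
end

section
/- Let G be a finite group in which all proper subgroups are nilpotent but G itself is not nilpotent. Then G is soluble. -/
/-!
Were the theorem false, a counterexample of least order would be simple: a nontrivial proper
normal subgroup `N` is nilpotent, and `G ⧸ N` again has only nilpotent proper subgroups. So it
suffices that a finite simple group whose maximal subgroups are nilpotent is cyclic.

If it is not, two distinct maximal subgroups meet trivially: for an intersection
`D = M₁ ⊓ M₂ ≠ ⊥` of largest order, the normalizer condition in the nilpotent `Mᵢ` gives
`D < Mᵢ ⊓ N(D)`, so a maximal `M₃ ≥ N(D)` meets both `Mᵢ` in more than `D` and equals both.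
Hence a maximal subgroup `M` is self-normalizing, and its `|G : M|` conjugates contain exactly
`|G| - |G : M|` elements other than `1`: at least `|G| / 2`, but fewer than `|G| - 1`. A maximal
subgroup through a missed element starts a second conjugacy class, and the two classes together
contain at least `|G|` non-identity elements.
-/

open Subgroup MulAction Pointwise

namespace Subgroup

variable {G : Type*} [Group G]

theorem lt_inf_normalizer_of_isNilpotent {M D : Subgroup G} (hM : Group.IsNilpotent M)
    (hDM : D < M) : D < M ⊓ normalizer (D : Set G) := by
  have hD : D.subgroupOf M < ⊤ := by
    rw [lt_top_iff_ne_top, Ne, subgroupOf_eq_top]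
    exact hDM.not_ge
  have := Group.normalizerCondition_of_isNilpotent _ hD
  rwa [← subgroupOf_normalizer_eq hDM.le, ← map_lt_map_iff_of_injective M.subtype_injective,
    subgroupOf_map_subtype, subgroupOf_map_subtype, inf_eq_left.mpr hDM.le, inf_comm] at this

theorem forall_ne_top_isNilpotent_of_surjective {G' : Type*} [Group G'] {f : G →* G'}
    (hf : Function.Surjective f) (h : ∀ H : Subgroup G, H ≠ ⊤ → Group.IsNilpotent H) :
    ∀ K : Subgroup G', K ≠ ⊤ → Group.IsNilpotent K := by
  intro K hK
  have hcomap : K.comap f ≠ ⊤ := fun htop => hK <| by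
    rw [← map_comap_eq_self_of_surjective hf K, htop, map_top_of_surjective f hf]
  have := h _ hcomap
  rw [← map_comap_eq_self_of_surjective hf K]
  exact Group.nilpotent_of_surjective _ (f.subgroupMap_surjective _)

theorem card_quotient_lt [Finite G] {N : Subgroup G} [N.Normal] (hN : N ≠ ⊥) :
    Nat.card (G ⧸ N) < Nat.card G := by
  rw [card_eq_card_quotient_mul_card_subgroup N]
  exact lt_mul_of_one_lt_right Nat.card_pos ((one_lt_card_iff_ne_bot N).mpr hN)

theorem isCoatom_of_mem_orbit_conjAct {M K : Subgroup G} (hM : IsCoatom M)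
    (hK : K ∈ orbit (ConjAct G) M) : IsCoatom K := by
  obtain ⟨g, rfl⟩ := hK
  exact (OrderIso.isCoatom_iff (MulDistribMulAction.toMulEquiv G g).mapSubgroup M).mpr hM

theorem ncard_orbit_conjAct (H : Subgroup G) :
    (orbit (ConjAct G) H).ncard = (normalizer (H : Set G)).index := by
  rw [← index_stabilizer, ← index_comap_of_surjective _
    (f := (ConjAct.toConjAct : G ≃* ConjAct G).toMonoidHom) ConjAct.toConjAct.surjective]
  congr 1
  ext g
  rw [mem_comap, mem_stabilizer_iff, ← conjAct_pointwise_smul_iff]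
  rfl

def conjugatesDiffOne (M : Subgroup G) : Set G :=
  ⋃ K ∈ orbit (ConjAct G) M, (K : Set G) \ {1}

theorem mem_conjugatesDiffOne {M : Subgroup G} {x : G} :
    x ∈ M.conjugatesDiffOne ↔ ∃ K ∈ orbit (ConjAct G) M, x ∈ K ∧ x ≠ 1 := by
  simp only [conjugatesDiffOne, Set.mem_iUnion₂, Set.mem_sdiff, SetLike.mem_coe,
    Set.mem_singleton_iff, exists_prop, ne_eq]

theorem conjugatesDiffOne_subset_compl_one (M : Subgroup G) : M.conjugatesDiffOne ⊆ {1}ᶜ :=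
  fun _ hx => by
    obtain ⟨_, _, _, hx1⟩ := mem_conjugatesDiffOne.mp hx
    exact hx1

theorem ncard_conjugatesDiffOne [Finite G] {M : Subgroup G}
    (hM : normalizer (M : Set G) = M) (hTI : (orbit (ConjAct G) M).Pairwise Disjoint) :
    M.conjugatesDiffOne.ncard = Nat.card G - M.index := by
  have hdisj : (orbit (ConjAct G) M).PairwiseDisjoint
      fun K : Subgroup G => (K : Set G) \ {1} := by
    intro K hK L hL hKL
    rw [Function.onFun, Set.disjoint_left]
    rintro x ⟨hxK, hx1⟩ ⟨hxL, -⟩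
    exact hx1 (disjoint_def.mp (hTI hK hL hKL) hxK hxL)
  rw [conjugatesDiffOne,
    Set.Finite.ncard_biUnion (Set.toFinite _) (fun _ _ => Set.toFinite _) hdisj,
    finsum_mem_congr rfl (g := fun _ => Nat.card M - 1),
    finsum_mem_eq_finite_toFinset_sum _ (Set.toFinite _), Finset.sum_const, smul_eq_mul,
    ← Set.ncard_eq_toFinset_card _ (Set.toFinite _), ncard_orbit_conjAct, hM, Nat.mul_sub_one,
    index_mul_card]
  rintro _ ⟨g, rfl⟩
  rw [Set.ncard_sdiff_singleton_of_mem (g • M).one_mem, ← Nat.card_coe_set_eq,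
    SetLike.coe_sort_coe, Nat.card_congr (equivSMul g M).toEquiv.symm]

theorem inf_eq_bot_of_isCoatom [Finite G] [IsSimpleGroup G]
    (hnil : ∀ M : Subgroup G, IsCoatom M → Group.IsNilpotent M)
    {M₁ M₂ : Subgroup G} (h₁ : IsCoatom M₁) (h₂ : IsCoatom M₂) (hne : M₁ ≠ M₂) :
    M₁ ⊓ M₂ = ⊥ := by
  suffices ∀ D : Subgroup G, ∀ M₁ M₂ : Subgroup G, IsCoatom M₁ → IsCoatom M₂ → M₁ ≠ M₂ →
      M₁ ⊓ M₂ = D → D = ⊥ from this _ M₁ M₂ h₁ h₂ hne rfl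
  intro D
  induction D using WellFoundedGT.induction with
  | _ D ih =>
  rintro M₁ M₂ h₁ h₂ hne rfl
  by_contra hD
  have inf_lt {M M' : Subgroup G} (h : IsCoatom M) (h' : IsCoatom M') (hne : M ≠ M') :
      M ⊓ M' < M :=
    inf_lt_left.mpr fun hle => hne ((h.le_iff_eq h'.1).mp hle).symm
  obtain ⟨M₃, h₃, hN⟩ : ∃ M₃, IsCoatom M₃ ∧ normalizer ((M₁ ⊓ M₂ : Subgroup G) : Set G) ≤ M₃ := by
    refine (eq_top_or_exists_le_coatom _).resolve_left fun htop => ?_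
    obtain hbot | htop := (normalizer_eq_top_iff.mp htop).eq_bot_or_eq_top
    · exact hD hbot
    · exact h₁.1 (top_le_iff.mp (htop ▸ inf_le_left))
  have eq_M₃ (M : Subgroup G) (hM : IsCoatom M) (hDM : M₁ ⊓ M₂ < M) : M = M₃ := by
    by_contra hne'
    have hlt := (lt_inf_normalizer_of_isNilpotent (hnil M hM) hDM).trans_le (inf_le_inf_left M hN)
    exact hD (le_bot_iff.mp ((ih _ hlt M M₃ hM h₃ hne' rfl) ▸ hlt.le))
  exact hne ((eq_M₃ M₁ h₁ (inf_lt h₁ h₂ hne)).trans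
    (eq_M₃ M₂ h₂ (inf_comm M₁ M₂ ▸ inf_lt h₂ h₁ hne.symm)).symm)

theorem exists_isCoatom_mem_of_not_isCyclic [Finite G] (hcyc : ¬IsCyclic G) (g : G) :
    ∃ M : Subgroup G, IsCoatom M ∧ g ∈ M := by
  obtain ⟨M, hM, hgM⟩ := (eq_top_or_exists_le_coatom (zpowers g)).resolve_left
    fun h => hcyc (isCyclic_iff_exists_zpowers_eq_top.mpr ⟨g, h⟩)
  exact ⟨M, hM, hgM (mem_zpowers g)⟩

theorem ne_bot_of_isCoatom_of_not_isCyclic [Nontrivial G] (hcyc : ¬IsCyclic G) {M : Subgroup G}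
    (hM : IsCoatom M) : M ≠ ⊥ := by
  rintro rfl
  obtain ⟨g, hg⟩ := exists_ne (1 : G)
  have : ⊥ < zpowers g := bot_lt_iff_ne_bot.mpr (zpowers_ne_bot.mpr hg)
  exact hcyc (isCyclic_iff_exists_zpowers_eq_top.mpr ⟨g, hM.2 _ this⟩)

theorem normalizer_eq_self_of_isCoatom [IsSimpleGroup G] {M : Subgroup G} (hM : IsCoatom M)
    (hbot : M ≠ ⊥) : normalizer (M : Set G) = M := by
  refine ((hM.le_iff_eq ?_).mp le_normalizer)
  intro htop
  exact (normalizer_eq_top_iff.mp htop).eq_bot_or_eq_top.elim hbot hM.1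

end Subgroup

section

variable {G : Type*} [Group G]

theorem isCyclic_of_isSimpleGroup [Finite G] [IsSimpleGroup G]
    (hnil : ∀ M : Subgroup G, IsCoatom M → Group.IsNilpotent M) : IsCyclic G := by
  by_contra hcyc
  have hTI {K L : Subgroup G} (hK : IsCoatom K) (hL : IsCoatom L) (hne : K ≠ L) : Disjoint K L :=
    disjoint_iff.mpr (inf_eq_bot_of_isCoatom hnil hK hL hne)
  have hcount {M : Subgroup G} (hM : IsCoatom M) :
      M.conjugatesDiffOne.ncard = Nat.card G - M.index ∧ 2 ≤ M.index ∧
        2 * M.index ≤ Nat.card G := by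
    have hbot := ne_bot_of_isCoatom_of_not_isCyclic hcyc hM
    refine ⟨ncard_conjugatesDiffOne (normalizer_eq_self_of_isCoatom hM hbot) ?_,
      one_lt_index_of_ne_top hM.1, ?_⟩
    · exact fun K hK L hL => hTI (isCoatom_of_mem_orbit_conjAct hM hK)
        (isCoatom_of_mem_orbit_conjAct hM hL)
    · rw [← M.index_mul_card, mul_comm]
      exact Nat.mul_le_mul_left _ ((one_lt_card_iff_ne_bot M).mpr hbot)
  obtain ⟨M₁, h₁, -⟩ := exists_isCoatom_mem_of_not_isCyclic hcyc 1
  obtain ⟨hC₁, h₁i, h₁n⟩ := hcount h₁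
  obtain ⟨y, hy, hyM₁⟩ : ∃ y : G, y ≠ 1 ∧ y ∉ M₁.conjugatesDiffOne := by
    by_contra! h
    have := Set.ncard_le_ncard (s := {1}ᶜ) (t := M₁.conjugatesDiffOne) fun y hy => h y hy
    rw [Set.ncard_compl, Set.ncard_singleton, hC₁] at this
    omega
  obtain ⟨M₂, h₂, hyM₂⟩ := exists_isCoatom_mem_of_not_isCyclic hcyc y
  obtain ⟨hC₂, h₂i, h₂n⟩ := hcount h₂
  have hdisj : Disjoint M₁.conjugatesDiffOne M₂.conjugatesDiffOne := by
    rw [Set.disjoint_left]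
    intro x hx₁ hx₂
    obtain ⟨K, hK, hxK, hx⟩ := mem_conjugatesDiffOne.mp hx₁
    obtain ⟨L, hL, hxL, -⟩ := mem_conjugatesDiffOne.mp hx₂
    have hKL : K ≠ L := by
      rintro rfl
      exact hyM₁ (mem_conjugatesDiffOne.mpr
        ⟨M₂, orbit_eq_iff.mpr hK ▸ mem_orbit_symm.mp hL, hyM₂, hy⟩)
    exact hx (disjoint_def.mp (hTI (isCoatom_of_mem_orbit_conjAct h₁ hK)
      (isCoatom_of_mem_orbit_conjAct h₂ hL) hKL) hxK hxL)
  have := Set.ncard_le_ncard (Set.union_subset (conjugatesDiffOne_subset_compl_one M₁)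
    (conjugatesDiffOne_subset_compl_one M₂))
  rw [Set.ncard_union_eq hdisj, Set.ncard_compl, Set.ncard_singleton, hC₁, hC₂] at this
  omega

theorem exists_normal_ne_bot_ne_top_of_not_isNilpotent [Finite G]
    (h : ∀ H : Subgroup G, H ≠ ⊤ → Group.IsNilpotent H) (hnil : ¬Group.IsNilpotent G) :
    ∃ N : Subgroup G, N.Normal ∧ N ≠ ⊥ ∧ N ≠ ⊤ := by
  by_contra! hsimple
  have : Nontrivial G := by
    by_contra hG
    rw [not_nontrivial_iff_subsingleton] at hG
    exact hnil inferInstance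
  have : IsSimpleGroup G := ⟨fun N hN => or_iff_not_imp_left.mpr (hsimple N hN)⟩
  have := isCyclic_of_isSimpleGroup fun M hM => h M hM.1
  let := IsCyclic.commGroup (α := G)
  exact hnil inferInstance

end

theorem schmidt_solvable_general (G : Type*) [Group G] [Finite G]
    (hprop : ∀ H : Subgroup G, H ≠ ⊤ → Group.IsNilpotent H) :
    IsSolvable G := by
  induction hn : Nat.card G using Nat.strong_induction_on generalizing G with
  | _ n ih =>
  by_cases hnil : Group.IsNilpotent G
  · exact IsNilpotent.to_isSolvable
  obtain ⟨N, hN, hbot, htop⟩ := exists_normal_ne_bot_ne_top_of_not_isNilpotent hprop hnil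
  have : Group.IsNilpotent N := hprop N htop
  have hquot : Group.IsSolvable (G ⧸ N) := ih _ (hn ▸ card_quotient_lt hbot) _
    (forall_ne_top_isNilpotent_of_surjective (QuotientGroup.mk'_surjective N) hprop) rfl
  exact (Group.isSolvable_iff_subgroup_quotient N).mpr ⟨IsNilpotent.to_isSolvable, hquot⟩

/-- Schmidt's theorem: a finite group all of whose proper subgroups are nilpotent,
but which is itself not nilpotent, is soluble. -/
theorem schmidt_solvable (G : Type*) [Group G] [Finite G]
    (hprop : ∀ H : Subgroup G, H ≠ ⊤ → Group.IsNilpotent H)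
    (hnotnil : ¬ Group.IsNilpotent G) :
    IsSolvable G :=
  schmidt_solvable_general G hprop
end

section
/- Let G be a finite soluble group, k a positive integer, π a set of primes, and suppose all δ_k*-commutators of G are π-elements. Then δ_k*(G) ≤ O_π(G). -/
/-!
Induction on `|G|`. A nontrivial soluble `G` has a nontrivial abelian normal `p`-subgroup `N`.
Every `δ_k*`-commutator of `G ⧸ N` lifts to one of `G` (replacing `a` and `b` by suitable powers
keeps their orders coprime), so by induction `δ_k*(G ⧸ N) ≤ O_π(G ⧸ N)`, and `δ_k*(G)` lies in
the preimage `M` of `O_π(G ⧸ N)`. If `p ∈ π`, then `M` is a normal `π`-subgroup.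

If `p ∉ π`, every `δ_k*`-commutator `x` centralises `N`: `x` acts without fixed points on
`[N, x]`, so every element of `[N, x]` is `[t, x]` with `t ∈ [N, x]`; hence `[N, x] ⊆ δ_k*(G)`
consists of elements that are both `p`- and `π`-elements, i.e. `[N, x] = 1`. Now `N ∩ δ_k*(G)` is
a central `p`-subgroup of `δ_k*(G)` with `π`-quotient; a Schur–Zassenhaus complement contains
every `δ_k*`-commutator, hence all of `δ_k*(G)`, so `N ∩ δ_k*(G) = 1` and `δ_k*(G)` is a
`π`-group.
-/

/-- The set of `δ_k*`-commutators of a group: every element is a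
`δ_0*`-commutator; for `k ≥ 1`, an element is a `δ_k*`-commutator if it equals
`[a,b]` where `a` and `b` are powers of `δ_{k-1}*`-commutators and have
coprime orders. -/
def deltaStar (G : Type*) [Group G] : ℕ → Set G
  | 0 => Set.univ
  | k + 1 => {x : G | ∃ a b : G,
      (∃ c ∈ deltaStar G k, ∃ n : ℕ, a = c ^ n) ∧
      (∃ c ∈ deltaStar G k, ∃ n : ℕ, b = c ^ n) ∧
      Nat.Coprime (orderOf a) (orderOf b) ∧
      x = a⁻¹ * b⁻¹ * a * b}

/-- The `π`-core `O_π(G)`: the largest normal `π`-subgroup of `G`. -/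
def piCore (π : Set ℕ) (G : Type*) [Group G] : Subgroup G :=
  sSup {H : Subgroup G | H.Normal ∧ ∀ x ∈ H, ∀ p : ℕ, p.Prime → p ∣ orderOf x → p ∈ π}

-- `IsPiNumber π (orderOf x)` says that `x` is a `π`-element. An element of infinite order has
-- `orderOf x = 0`, and `IsPiNumber π 0` holds only if `π` contains every prime.
def IsPiNumber (π : Set ℕ) (n : ℕ) : Prop :=
  ∀ p : ℕ, p.Prime → p ∣ n → p ∈ π

namespace IsPiNumber

variable {π : Set ℕ} {m n : ℕ}

theorem one : IsPiNumber π 1 :=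
  fun _ hp hp1 ↦ (hp.not_dvd_one hp1).elim

theorem of_dvd (hn : IsPiNumber π n) (hmn : m ∣ n) : IsPiNumber π m :=
  fun p hp hpm ↦ hn p hp (hpm.trans hmn)

theorem mul (hm : IsPiNumber π m) (hn : IsPiNumber π n) : IsPiNumber π (m * n) :=
  fun p hp hpmn ↦ (hp.dvd_mul.mp hpmn).elim (hm p hp) (hn p hp)

theorem coprime_prime_pow (hn : IsPiNumber π n) {p : ℕ} (hp : p.Prime) (hpπ : p ∉ π) (k : ℕ) :
    (p ^ k).Coprime n :=
  Nat.Coprime.pow_left k ((hp.coprime_iff_not_dvd).mpr fun hpn ↦ hpπ (hn p hp hpn))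

variable {G : Type*} [Group G]

theorem orderOf_of_pow {x : G} (hn : IsPiNumber π n) (hxn : IsPiNumber π (orderOf (x ^ n))) :
    IsPiNumber π (orderOf x) :=
  (hn.mul hxn).of_dvd <| orderOf_dvd_of_pow_eq_one <| by rw [pow_mul, pow_orderOf_eq_one]

theorem natCard_of_forall_orderOf [Finite G] (h : ∀ x : G, IsPiNumber π (orderOf x)) :
    IsPiNumber π (Nat.card G) := by
  intro p hp hpG
  have := Fact.mk hp
  obtain ⟨x, hx⟩ := exists_prime_orderOf_dvd_card' p hpG
  exact h x p hp hx.symm.dvd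

end IsPiNumber

section DeltaStar

variable {G H : Type*} [Group G] [Group H]

theorem deltaStar_antitone : Antitone (deltaStar G) := by
  refine antitone_nat_of_succ_le fun k ↦ ?_
  induction k with
  | zero => exact fun _ _ ↦ trivial
  | succ k ih =>
    rintro _ ⟨a, b, ⟨c, hc, n, rfl⟩, ⟨d, hd, m, rfl⟩, hcop, rfl⟩
    exact ⟨c ^ n, d ^ m, ⟨c, ih hc, n, rfl⟩, ⟨d, ih hd, m, rfl⟩, hcop, rfl⟩

theorem map_mem_deltaStar (f : G →* H) {k : ℕ} {x : G} (hx : x ∈ deltaStar G k) :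
    f x ∈ deltaStar H k := by
  induction k generalizing x with
  | zero => trivial
  | succ k ih =>
    obtain ⟨_, _, ⟨c, hc, n, rfl⟩, ⟨d, hd, m, rfl⟩, hcop, rfl⟩ := hx
    refine ⟨f c ^ n, f d ^ m, ⟨f c, ih hc, n, rfl⟩, ⟨f d, ih hd, m, rfl⟩, ?_, by simp⟩
    simpa only [map_pow] using
      hcop.coprime_dvd_left (orderOf_map_dvd f _) |>.coprime_dvd_right (orderOf_map_dvd f _)

instance closure_deltaStar_normal (k : ℕ) : (Subgroup.closure (deltaStar G k)).Normal where
  conj_mem x hx g := by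
    have hmap := Subgroup.mem_map_of_mem (MulAut.conj g).toMonoidHom hx
    rw [MonoidHom.map_closure] at hmap
    exact Subgroup.closure_mono (Set.image_subset_iff.mpr fun y hy ↦ map_mem_deltaStar _ hy) hmap

theorem map_closure_deltaStar_le (f : G →* H) (k : ℕ) :
    (Subgroup.closure (deltaStar G k)).map f ≤ Subgroup.closure (deltaStar H k) := by
  rw [MonoidHom.map_closure]
  exact Subgroup.closure_mono (Set.image_subset_iff.mpr fun _ ↦ map_mem_deltaStar f)

theorem exists_pow_map_eq_and_prime_dvd [Finite G] (f : G →* H) (a : G) :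
    ∃ m : ℕ, f (a ^ m) = f a ∧ ∀ q : ℕ, q.Prime → q ∣ orderOf (a ^ m) → q ∣ orderOf (f a) := by
  induction h : orderOf a using Nat.strong_induction_on generalizing a with
  | _ n ih =>
  -- If a prime `q` divides `|a|` but not `|f a|`, then `f a` is a power of `f (a ^ q)`, and the
  -- corresponding power of `a ^ q` has the same image as `a` and smaller order.
  by_cases hgood : ∀ q : ℕ, q.Prime → q ∣ orderOf a → q ∣ orderOf (f a)
  · exact ⟨1, by rw [pow_one], by rwa [pow_one]⟩
  push Not at hgood
  obtain ⟨q, hq, hqa, hqfa⟩ := hgood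
  obtain ⟨s, hs⟩ := exists_pow_eq_self_of_coprime ((hq.coprime_iff_not_dvd).mpr hqfa)
  have hfb : f ((a ^ q) ^ s) = f a := by rw [map_pow, map_pow, hs]
  have hlt : orderOf ((a ^ q) ^ s) < n := by
    have hpos := orderOf_pos a
    calc orderOf ((a ^ q) ^ s) ≤ orderOf (a ^ q) :=
          Nat.le_of_dvd (orderOf_pos _) (orderOf_pow_dvd s)
      _ = n / q := by rw [orderOf_pow_of_dvd hq.ne_zero hqa, h]
      _ < n := Nat.div_lt_self (h ▸ hpos) hq.one_lt
  obtain ⟨m, hm, hgood⟩ := ih _ hlt ((a ^ q) ^ s) rfl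
  refine ⟨q * s * m, by rw [pow_mul, pow_mul, hm, hfb], ?_⟩
  rw [pow_mul, pow_mul, ← hfb]
  exact hgood

theorem exists_mem_deltaStar_map_eq [Finite G] {f : G →* H} (hf : Function.Surjective f)
    {k : ℕ} {y : H} (hy : y ∈ deltaStar H k) : ∃ x ∈ deltaStar G k, f x = y := by
  induction k generalizing y with
  | zero => exact (hf y).imp fun x hx ↦ ⟨trivial, hx⟩
  | succ k ih =>
    obtain ⟨_, _, ⟨c, hc, n, rfl⟩, ⟨d, hd, n', rfl⟩, hcop, rfl⟩ := hy
    obtain ⟨c', hc', rfl⟩ := ih hc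
    obtain ⟨d', hd', rfl⟩ := ih hd
    obtain ⟨m, hm, hcm⟩ := exists_pow_map_eq_and_prime_dvd f (c' ^ n)
    obtain ⟨m', hm', hdm'⟩ := exists_pow_map_eq_and_prime_dvd f (d' ^ n')
    refine ⟨_, ⟨(c' ^ n) ^ m, (d' ^ n') ^ m', ⟨c', hc', n * m, (pow_mul c' n m).symm⟩,
      ⟨d', hd', n' * m', (pow_mul d' n' m').symm⟩, ?_, rfl⟩,
      by simp only [map_mul, map_inv, hm, hm', map_pow]⟩
    refine Nat.coprime_of_dvd fun q hq hqc hqd ↦ hq.ne_one ?_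
    rw [← map_pow, ← map_pow] at hcop
    exact Nat.eq_one_of_dvd_coprimes hcop (hcm q hq hqc) (hdm' q hq hqd)

theorem isPiNumber_orderOf_of_mem_deltaStar_of_surjective [Finite G] {π : Set ℕ} {k : ℕ}
    (hπ : ∀ x ∈ deltaStar G k, IsPiNumber π (orderOf x)) {f : G →* H}
    (hf : Function.Surjective f) {y : H} (hy : y ∈ deltaStar H k) : IsPiNumber π (orderOf y) := by
  obtain ⟨x, hx, rfl⟩ := exists_mem_deltaStar_map_eq hf hy
  exact (hπ x hx).of_dvd (orderOf_map_dvd f x)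

theorem subset_deltaStar_of_surjOn {S : Set G} {x : G} {k : ℕ}
    (hx : x ∈ deltaStar G k) (hS : Set.SurjOn (fun s ↦ s⁻¹ * x⁻¹ * s * x) S S)
    (hcop : ∀ s ∈ S, (orderOf s).Coprime (orderOf x)) : S ⊆ deltaStar G k := by
  suffices ∀ j ≤ k, S ⊆ deltaStar G j from this k le_rfl
  intro j hj
  induction j with
  | zero => exact fun _ _ ↦ trivial
  | succ j ih =>
    intro s hs
    obtain ⟨t, ht, rfl⟩ := hS hs
    exact ⟨t, x, ⟨t, ih (by omega) ht, 1, (pow_one t).symm⟩,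
      ⟨x, deltaStar_antitone (by omega) hx, 1, (pow_one x).symm⟩, hcop t ht, rfl⟩

end DeltaStar

section PiCore

variable {G : Type*} [Group G] {π : Set ℕ}

theorem pow_orderOf_mk_mem (N : Subgroup G) [N.Normal] (x : G) : x ^ orderOf (x : G ⧸ N) ∈ N :=
  (QuotientGroup.eq_one_iff _).mp (by rw [QuotientGroup.mk_pow, pow_orderOf_eq_one])

theorem isPiNumber_orderOf_mul_of_mem {N : Subgroup G} [N.Normal]
    (hN : ∀ y ∈ N, IsPiNumber π (orderOf y)) {x y : G} (hx : IsPiNumber π (orderOf x))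
    (hy : y ∈ N) : IsPiNumber π (orderOf (x * y)) := by
  have hxy : ((x * y : G) : G ⧸ N) = x := by
    rw [QuotientGroup.mk_mul, (QuotientGroup.eq_one_iff y).mpr hy, mul_one]
  refine IsPiNumber.orderOf_of_pow ?_ (hN _ (pow_orderOf_mk_mem N (x * y)))
  exact hx.of_dvd (hxy ▸ orderOf_map_dvd (QuotientGroup.mk' N) x)

instance piCore_normal : (piCore π G).Normal :=
  Subgroup.sSup_normal _ fun _ hH ↦ hH.1

theorem le_piCore {H : Subgroup G} [hH : H.Normal] (hπ : ∀ x ∈ H, IsPiNumber π (orderOf x)) :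
    H ≤ piCore π G :=
  le_sSup ⟨hH, hπ⟩

theorem isPiNumber_orderOf_of_mem_piCore {x : G} (hx : x ∈ piCore π G) :
    IsPiNumber π (orderOf x) := by
  have hbot : (⊥ : Subgroup G) ∈ {H : Subgroup G | H.Normal ∧ ∀ x ∈ H, IsPiNumber π (orderOf x)} :=
    ⟨inferInstance, fun x hx ↦ by simpa [Subgroup.mem_bot.mp hx] using IsPiNumber.one⟩
  have hdir : DirectedOn (· ≤ ·)
      {H : Subgroup G | H.Normal ∧ ∀ x ∈ H, IsPiNumber π (orderOf x)} := by
    rintro H ⟨hHn, hH⟩ K ⟨hKn, hK⟩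
    refine ⟨H ⊔ K, ⟨Subgroup.sup_normal H K, fun x hx ↦ ?_⟩, le_sup_left, le_sup_right⟩
    obtain ⟨y, hy, z, hz, rfl⟩ := Subgroup.mem_sup_of_normal_right.mp hx
    exact isPiNumber_orderOf_mul_of_mem hK (hH y hy) hz
  obtain ⟨H, ⟨-, hH⟩, hxH⟩ := (Subgroup.mem_sSup_of_directedOn ⟨⊥, hbot⟩ hdir).mp hx
  exact hH x hxH

end PiCore

section Commutator

variable {G : Type*} [Group G]

theorem commutator_pow_orderOf_eq_one {x n : G} (h : Commute x (n⁻¹ * x⁻¹ * n * x)) :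
    (n⁻¹ * x⁻¹ * n * x) ^ orderOf x = 1 := by
  have key : ∀ j : ℕ, (n⁻¹ * x⁻¹ * n * x) ^ j = n⁻¹ * (x ^ j)⁻¹ * n * x ^ j := by
    intro j
    induction j with
    | zero => group
    | succ j ih =>
      calc (n⁻¹ * x⁻¹ * n * x) ^ (j + 1)
          = n⁻¹ * (x ^ j)⁻¹ * n * (x ^ j * (n⁻¹ * x⁻¹ * n * x)) := by rw [pow_succ, ih]; group
        _ = n⁻¹ * (x ^ j)⁻¹ * n * ((n⁻¹ * x⁻¹ * n * x) * x ^ j) := by rw [(h.pow_left j).eq]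
        _ = n⁻¹ * (x ^ (j + 1))⁻¹ * n * x ^ (j + 1) := by group
  rw [key, pow_orderOf_eq_one]
  group

theorem eq_one_of_pow_eq_one_of_coprime {x : G} {m : ℕ} (hx : x ^ m = 1)
    (hcop : (orderOf x).Coprime m) : x = 1 :=
  orderOf_eq_one_iff.mp (hcop.eq_one_of_dvd (orderOf_dvd_of_pow_eq_one hx))

variable (N : Subgroup G) [hN : N.Normal] [IsMulCommutative N] (x : G)

def commutatorHom : N →* G :=
  MonoidHom.mk' (fun n ↦ (n : G)⁻¹ * x⁻¹ * n * x) fun a b ↦ by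
    have hcomm : (b : G)⁻¹ * ((a : G)⁻¹ * (x⁻¹ * a * x)) = (a : G)⁻¹ * (x⁻¹ * a * x) * (b : G)⁻¹ :=
      setLike_mul_comm (N.inv_mem b.2) (N.mul_mem (N.inv_mem a.2) (hN.conj_mem' _ a.2 x))
    simp only [Subgroup.coe_mul]
    calc ((a : G) * b)⁻¹ * x⁻¹ * (a * b) * x
        = (b : G)⁻¹ * ((a : G)⁻¹ * (x⁻¹ * a * x)) * (x⁻¹ * b * x) := by group
      _ = (a : G)⁻¹ * (x⁻¹ * a * x) * (b : G)⁻¹ * (x⁻¹ * b * x) := by rw [hcomm]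
      _ = _ := by group

theorem range_commutatorHom_le : (commutatorHom N x).range ≤ N := by
  rintro _ ⟨n, rfl⟩
  simpa only [commutatorHom, MonoidHom.mk'_apply, mul_assoc] using
    N.mul_mem (N.inv_mem n.2) (by simpa only [mul_assoc] using hN.conj_mem' _ n.2 x)

variable {N x}

theorem commutatorHom_eq_one_iff (n : N) : commutatorHom N x n = 1 ↔ Commute x n := by
  change (n : G)⁻¹ * x⁻¹ * n * x = 1 ↔ x * n = n * x
  rw [← mul_inv_rev, mul_assoc, inv_mul_eq_one]

-- `x` has no fixed points on `[N, x]` (`commutator_pow_orderOf_eq_one`), so `s ↦ [s, x]` is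
-- injective, hence bijective, on the finite group `[N, x]`.
theorem surjOn_commutator_range [Finite G] (hcop : ∀ n ∈ N, (orderOf n).Coprime (orderOf x)) :
    Set.SurjOn (fun s ↦ s⁻¹ * x⁻¹ * s * x) (commutatorHom N x).range
      (commutatorHom N x).range := by
  set S := (commutatorHom N x).range
  have hSN := range_commutatorHom_le N x
  have hmaps : Set.MapsTo (fun s ↦ s⁻¹ * x⁻¹ * s * x) S S := fun s hs ↦ ⟨⟨s, hSN hs⟩, rfl⟩
  refine (((Set.toFinite _).injOn_iff_bijOn_of_mapsTo hmaps).mp fun a ha b hb hab ↦ ?_).surjOn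
  have hcomm : Commute x (a * b⁻¹) := by
    refine (commutatorHom_eq_one_iff ⟨a * b⁻¹, hSN (S.mul_mem ha (S.inv_mem hb))⟩).mp ?_
    change commutatorHom N x (⟨a, hSN ha⟩ * (⟨b, hSN hb⟩)⁻¹) = 1
    rw [map_mul, map_inv]
    exact mul_inv_eq_one.mpr hab
  obtain ⟨n, hn⟩ := S.mul_mem ha (S.inv_mem hb)
  rw [← hn] at hcomm
  rw [← mul_inv_eq_one, ← hn]
  exact eq_one_of_pow_eq_one_of_coprime (commutator_pow_orderOf_eq_one hcomm)
    (hcop _ (hSN ⟨n, rfl⟩))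

end Commutator

section PGroup

variable {G : Type*} [Group G] {π : Set ℕ} {p : ℕ} [hp : Fact p.Prime] {N : Subgroup G}

theorem IsPGroup.isPiNumber_orderOf (hN : IsPGroup p N) (hpπ : p ∈ π) {n : G} (hn : n ∈ N) :
    IsPiNumber π (orderOf n) := by
  obtain ⟨k, hk⟩ := IsPGroup.iff_orderOf.mp hN ⟨n, hn⟩
  rw [Subgroup.orderOf_mk] at hk
  intro q hq hqn
  rw [(Nat.prime_dvd_prime_iff_eq hq hp.out).mp (hq.dvd_of_dvd_pow (hk ▸ hqn))]
  exact hpπ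

theorem IsPGroup.coprime_orderOf_of_isPiNumber (hN : IsPGroup p N) (hpπ : p ∉ π) {n : G}
    (hn : n ∈ N) {m : ℕ} (hm : IsPiNumber π m) : (orderOf n).Coprime m := by
  obtain ⟨k, hk⟩ := IsPGroup.iff_orderOf.mp hN ⟨n, hn⟩
  rw [Subgroup.orderOf_mk] at hk
  exact hk ▸ hm.coprime_prime_pow hp.out hpπ k

theorem IsPGroup.eq_one_of_isPiNumber (hN : IsPGroup p N) (hpπ : p ∉ π) {n : G} (hn : n ∈ N)
    (hnπ : IsPiNumber π (orderOf n)) : n = 1 :=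
  orderOf_eq_one_iff.mp <| (Nat.coprime_self _).mp (hN.coprime_orderOf_of_isPiNumber hpπ hn hnπ)

theorem commute_of_mem_deltaStar [Finite G] [N.Normal] [IsMulCommutative N] (hN : IsPGroup p N)
    (hpπ : p ∉ π) {k : ℕ} (hπ : ∀ y ∈ deltaStar G k, IsPiNumber π (orderOf y)) {x : G}
    (hx : x ∈ deltaStar G k) {n : G} (hn : n ∈ N) : Commute x n := by
  have hcop : ∀ n ∈ N, (orderOf n).Coprime (orderOf x) :=
    fun n hn ↦ hN.coprime_orderOf_of_isPiNumber hpπ hn (hπ x hx)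
  have hS := subset_deltaStar_of_surjOn hx (surjOn_commutator_range hcop)
    fun s hs ↦ hcop s (range_commutatorHom_le N x hs)
  have hψn : commutatorHom N x ⟨n, hn⟩ = 1 :=
    hN.eq_one_of_isPiNumber hpπ (range_commutatorHom_le N x ⟨_, rfl⟩) (hπ _ (hS ⟨_, rfl⟩))
  exact (commutatorHom_eq_one_iff ⟨n, hn⟩).mp hψn

end PGroup

section Complement

variable {D : Type*} [Group D] {A : Subgroup D}

theorem mem_of_isComplement'_of_commute {K : Subgroup D} (hAK : A.IsComplement' K) {x : D}
    (hcomm : ∀ a ∈ A, Commute x a) (hcop : (orderOf x).Coprime (Nat.card A)) : x ∈ K := by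
  obtain ⟨⟨a, k⟩, hak, -⟩ := hAK.existsUnique x
  have hak' : Commute (a : D) k := by
    have hxa : Commute (a : D) x := (hcomm a a.2).symm
    rw [← hak] at hxa
    simpa using (Commute.refl _).inv_right.mul_right hxa
  have hpow : (a : D) ^ orderOf x = ((k : D) ^ orderOf x)⁻¹ := by
    rw [eq_inv_iff_mul_eq_one, ← hak'.mul_pow, hak, pow_orderOf_eq_one]
  have ha1 : (a : D) ^ orderOf x = 1 :=
    Subgroup.disjoint_def.mp hAK.disjoint (A.pow_mem a.2 _) (hpow ▸ K.inv_mem (K.pow_mem k.2 _))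
  have ha : (a : D) = 1 := eq_one_of_pow_eq_one_of_coprime ha1
    ((hcop.coprime_dvd_right (Subgroup.orderOf_coe a ▸ orderOf_dvd_natCard a)).symm)
  rw [← hak, ha, one_mul]
  exact k.2

theorem eq_bot_of_coprime_of_commute [A.Normal] (hA : (Nat.card A).Coprime A.index) {X : Set D}
    (hX : Subgroup.closure X = ⊤) (hcomm : ∀ x ∈ X, ∀ a ∈ A, Commute x a)
    (hcop : ∀ x ∈ X, (orderOf x).Coprime (Nat.card A)) : A = ⊥ := by
  obtain ⟨K, hK⟩ := Subgroup.exists_right_complement'_of_coprime hA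
  have hKtop : K = ⊤ := top_le_iff.mp <| hX ▸ (Subgroup.closure_le K).mpr
    fun x hx ↦ mem_of_isComplement'_of_commute hK (hcomm x hx) (hcop x hx)
  exact disjoint_top.mp (hKtop ▸ hK.disjoint)

end Complement

theorem disjoint_closure_deltaStar {G : Type*} [Group G] [Finite G] {π : Set ℕ} {p : ℕ}
    [hp : Fact p.Prime] {k : ℕ} {N : Subgroup G} [N.Normal] [IsMulCommutative N]
    (hN : IsPGroup p N) (hpπ : p ∉ π) (hπ : ∀ y ∈ deltaStar G k, IsPiNumber π (orderOf y))
    (hD : ∀ d ∈ Subgroup.closure (deltaStar G k), IsPiNumber π (orderOf (d : G ⧸ N))) :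
    Disjoint N (Subgroup.closure (deltaStar G k)) := by
  set D := Subgroup.closure (deltaStar G k)
  rw [← Subgroup.subgroupOf_eq_bot]
  obtain ⟨n, hcard⟩ : ∃ n, Nat.card (N.subgroupOf D) = p ^ n :=
    IsPGroup.iff_card.mp hN.comap_subtype
  let f : D →* G ⧸ N := (QuotientGroup.mk' N).comp D.subtype
  have hker : f.ker = N.subgroupOf D := by
    ext d
    simp [f, Subgroup.mem_subgroupOf]
  have hindex : IsPiNumber π (N.subgroupOf D).index := by
    rw [← hker, Subgroup.index_ker]
    refine IsPiNumber.natCard_of_forall_orderOf ?_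
    intro y
    obtain ⟨d, hd⟩ := y.2
    rw [← Subgroup.orderOf_coe, ← hd]
    exact hD d d.2
  refine eq_bot_of_coprime_of_commute (X := Subtype.val ⁻¹' deltaStar G k) ?_
    Subgroup.closure_closure_coe_preimage (fun x hx a ha ↦ ?_) (fun x hx ↦ ?_)
  · exact hcard ▸ hindex.coprime_prime_pow hp.out hpπ n
  · exact Subtype.ext (commute_of_mem_deltaStar hN hpπ hπ hx ha)
  · rw [hcard, ← Subgroup.orderOf_coe]
    exact (IsPiNumber.coprime_prime_pow (hπ x hx) hp.out hpπ n).symm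

section Solvable

variable {G : Type*} [Group G]

theorem exists_normal_isMulCommutative_ne_bot [Group.IsSolvable G] [Nontrivial G] :
    ∃ A : Subgroup G, A.Normal ∧ IsMulCommutative A ∧ A ≠ ⊥ := by
  classical
  have hex : ∃ n, derivedSeries G n = ⊥ := Group.IsSolvable.solvable
  obtain ⟨m, hm⟩ : ∃ m, Nat.find hex = m + 1 := by
    refine Nat.exists_eq_succ_of_ne_zero fun h ↦ (top_ne_bot : (⊤ : Subgroup G) ≠ ⊥) ?_
    rw [← derivedSeries_zero, ← h]
    exact Nat.find_spec hex
  refine ⟨derivedSeries G m, derivedSeries_normal G m, ?_, Nat.find_min hex (by omega)⟩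
  rw [← Subgroup.commutator_self_eq_bot_iff, ← derivedSeries_succ, ← hm]
  exact Nat.find_spec hex

theorem exists_normal_isPGroup_of_isMulCommutative [Finite G] {A : Subgroup G} [A.Normal]
    [IsMulCommutative A] (hA : A ≠ ⊥) :
    ∃ p, p.Prime ∧ ∃ N : Subgroup G, N.Normal ∧ IsMulCommutative N ∧ IsPGroup p N ∧ N ≠ ⊥ := by
  set p := (Nat.card A).minFac
  have hp : p.Prime := Nat.minFac_prime ((Subgroup.one_lt_card_iff_ne_bot A).mpr hA).ne'
  have := Fact.mk hp
  let P : Sylow p A := default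
  have := P.characteristic_of_normal inferInstance
  refine ⟨p, hp, (P : Subgroup A).map A.subtype, inferInstance, inferInstance,
    P.isPGroup'.map _, ?_⟩
  exact (Subgroup.map_eq_bot_iff_of_injective _ A.subtype_injective).not.mpr
    (P.ne_bot_of_dvd_card (Nat.minFac_dvd _))

end Solvable

theorem card_quotient_lt_card {G : Type*} [Group G] [Finite G] {N : Subgroup G} [N.Normal]
    (hN : N ≠ ⊥) : Nat.card (G ⧸ N) < Nat.card G := by
  rw [N.card_eq_card_quotient_mul_card_subgroup]
  exact lt_mul_of_one_lt_right Nat.card_pos ((Subgroup.one_lt_card_iff_ne_bot N).mpr hN)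

theorem deltaStar_le_piCore_of_solvable_general (G : Type*) [Group G] [Finite G]
    (hsol : IsSolvable G) (k : ℕ) (π : Set ℕ)
    (hπ : ∀ x ∈ deltaStar G k, ∀ p : ℕ, p.Prime → p ∣ orderOf x → p ∈ π) :
    Subgroup.closure (deltaStar G k) ≤ piCore π G := by
  induction h : Nat.card G using Nat.strong_induction_on generalizing G with
  | _ n ih =>
  have : Group.IsSolvable G := hsol
  rcases subsingleton_or_nontrivial G with _ | _
  · exact fun x _ ↦ Subsingleton.elim x 1 ▸ one_mem _
  obtain ⟨A, _, _, hA⟩ := exists_normal_isMulCommutative_ne_bot (G := G)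
  obtain ⟨p, hp, N, _, _, hN, hNbot⟩ := exists_normal_isPGroup_of_isMulCommutative hA
  have := Fact.mk hp
  have hQ := ih _ (h ▸ card_quotient_lt_card hNbot) (G ⧸ N) (inferInstance : Group.IsSolvable _)
    (fun _ ↦ isPiNumber_orderOf_of_mem_deltaStar_of_surjective hπ (QuotientGroup.mk'_surjective N))
    rfl
  have hD : ∀ d ∈ Subgroup.closure (deltaStar G k), (d : G ⧸ N) ∈ piCore π (G ⧸ N) :=
    fun d hd ↦ hQ (map_closure_deltaStar_le (QuotientGroup.mk' N) k ⟨d, hd, rfl⟩)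
  by_cases hpπ : p ∈ π
  · have hM : (piCore π (G ⧸ N)).comap (QuotientGroup.mk' N) ≤ piCore π G :=
      le_piCore fun x hx ↦ (isPiNumber_orderOf_of_mem_piCore hx).orderOf_of_pow
        (hN.isPiNumber_orderOf hpπ (pow_orderOf_mk_mem N x))
    exact fun d hd ↦ hM (hD d hd)
  · have hdisj := disjoint_closure_deltaStar hN hpπ hπ
      fun d hd ↦ isPiNumber_orderOf_of_mem_piCore (hD d hd)
    refine le_piCore fun d hd ↦ (isPiNumber_orderOf_of_mem_piCore (hD d hd)).orderOf_of_pow ?_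
    rw [Subgroup.disjoint_def.mp hdisj (pow_orderOf_mk_mem N d) (pow_mem hd _), orderOf_one]
    exact IsPiNumber.one

/-- If `G` is a finite soluble group all of whose `δ_k*`-commutators are
`π`-elements, then `δ_k*(G) ≤ O_π(G)`. -/
theorem deltaStar_le_piCore_of_solvable (G : Type*) [Group G] [Finite G]
    (hsol : IsSolvable G) (k : ℕ) (hk : 1 ≤ k) (π : Set ℕ)
    (hπ : ∀ x ∈ deltaStar G k, ∀ p : ℕ, p.Prime → p ∣ orderOf x → p ∈ π) :
    Subgroup.closure (deltaStar G k) ≤ piCore π G :=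
  deltaStar_le_piCore_of_solvable_general G hsol k π hπ
end

section
/- A finite group N whose central quotient N/Z(N) is a π-group has derived subgroup N' a π-group. -/
/-- Schur-type theorem: if the central quotient `N/Z(N)` of a finite group `N`
is a `π`-group, then the derived subgroup `N'` is a `π`-group. -/
theorem commutator_pi_group_of_central_quotient (N : Type*) [Group N] [Finite N]
    (π : Set ℕ)
    (hq : ∀ p : ℕ, p.Prime → p ∣ Nat.card (N ⧸ Subgroup.center N) → p ∈ π) :
    ∀ p : ℕ, p.Prime → p ∣ Nat.card (commutator N) → p ∈ π := by
  intro p hp hdvd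
  have h := Subgroup.card_commutator_dvd_index_center_pow N
  have hpow : p ∣ (Subgroup.center N).index ^ ((Subgroup.center N).index * Nat.card (commutatorSet N) + 1) := hdvd.trans h
  have : p ∣ (Subgroup.center N).index := hp.dvd_of_dvd_pow hpow
  exact hq p hp (by rwa [Subgroup.index_eq_card] at this)
end

section
/- Let G be a finite group, N a normal subgroup, and suppose the image of x in G/N is a δ_k*-commutator of G/N. Then there exists a δ_k*-commutator y ∈ G such that x ∈ yN. -/
/-- Decompose `r` as `u * v` with `u ∣ e ^ r` and `v` coprime to `e`. -/
lemma nat_decomp (r e : ℕ) (hr : r ≠ 0) : ∃ u v : ℕ, u * v = r ∧ u ∣ e ^ r ∧ Nat.Coprime v e := by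
  refine ⟨Nat.gcd r (e ^ r), r / Nat.gcd r (e ^ r),
    Nat.mul_div_cancel' (Nat.gcd_dvd_left _ _), Nat.gcd_dvd_right _ _, ?_⟩
  by_contra hcop
  obtain ⟨p, hp, hpg⟩ := Nat.exists_prime_and_dvd hcop
  have hpv : p ∣ r / Nat.gcd r (e ^ r) := hpg.trans (Nat.gcd_dvd_left _ _)
  have hpe : p ∣ e := hpg.trans (Nat.gcd_dvd_right _ _)
  set f := r.factorization p with hf
  have h1 : p ^ f ∣ r := Nat.ordProj_dvd r p
  have h2 : p ^ f ∣ e ^ r := by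
    obtain ⟨m, hm⟩ := hpe
    calc p ^ f ∣ p ^ r := pow_dvd_pow p (le_of_lt (Nat.factorization_lt p hr))
    _ ∣ e ^ r := by rw [hm, mul_pow]; exact dvd_mul_right _ _
  have h3 : p ^ f ∣ Nat.gcd r (e ^ r) := Nat.dvd_gcd h1 h2
  have h4 : p ^ (f + 1) ∣ r := by
    have := mul_dvd_mul h3 hpv
    rwa [Nat.mul_div_cancel' (Nat.gcd_dvd_left _ _), ← pow_succ] at this
  exact Nat.pow_succ_factorization_not_dvd hr hp h4

/-- In a finite group, every element `h` has a power with the same image in the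
quotient whose order divides a power of the order of that image. -/
lemma exists_pow_lift {G : Type*} [Group G] [Finite G] (N : Subgroup G) [N.Normal] (h : G) :
    ∃ s : ℕ, ((h ^ s : G) : G ⧸ N) = (h : G ⧸ N) ∧
      orderOf (h ^ s) ∣ (orderOf (h : G ⧸ N)) ^ (orderOf h) := by
  set r := orderOf h with hrdef
  set e := orderOf (h : G ⧸ N) with hedef
  have hr : r ≠ 0 := (orderOf_pos h).ne'
  obtain ⟨u, v, huv, hue, hcop⟩ := nat_decomp r e hr
  obtain ⟨s, hs0, hs1⟩ := Nat.chineseRemainder hcop 0 1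
  have hv : v ≠ 0 := by rintro rfl; simp at huv; omega
  refine ⟨s, ?_, ?_⟩
  · have : ((h : G ⧸ N)) ^ s = ((h : G ⧸ N)) ^ 1 := pow_eq_pow_iff_modEq.mpr hs1
    simpa using this
  · have hvs : v ∣ s := (Nat.modEq_zero_iff_dvd).mp hs0
    have hvg : v ∣ Nat.gcd r s := Nat.dvd_gcd ⟨u, by rw [← huv]; ring⟩ hvs
    obtain ⟨t, ht⟩ := hvg
    have hrg : Nat.gcd r s ∣ r := Nat.gcd_dvd_left r s
    obtain ⟨w, hw⟩ := hrg
    have hgpos : 0 < Nat.gcd r s := Nat.gcd_pos_of_pos_left s (Nat.pos_of_ne_zero hr)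
    have hrd : r / Nat.gcd r s = w := Nat.div_eq_of_eq_mul_left hgpos (hw.trans (mul_comm _ _))
    have hu : u = t * w := by
      apply Nat.eq_of_mul_eq_mul_right (Nat.pos_of_ne_zero hv)
      calc u * v = r := huv
      _ = v * t * w := by rw [hw, ht]
      _ = t * w * v := by ring
    rw [orderOf_pow, ← hrdef, hrd]
    exact dvd_trans ⟨t, by rw [hu]; ring⟩ hue


/-- If the image of `x` in `G/N` is a `δ_k*`-commutator of `G/N`, then there is
a `δ_k*`-commutator `y ∈ G` with `x ∈ yN`. -/
theorem deltaStar_lift_of_quotient (G : Type*) [Group G] [Finite G]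
    (N : Subgroup G) (hN : N.Normal) (k : ℕ) (x : G)
    (hx : (x : G ⧸ N) ∈ deltaStar (G ⧸ N) k) :
    ∃ y ∈ deltaStar G k, ∃ z ∈ N, x = y * z := by
  induction k generalizing x with
  | zero => exact ⟨x, trivial, 1, N.one_mem, (mul_one x).symm⟩
  | succ k ih =>
    obtain ⟨A, B, ⟨C, hC, n, hA⟩, ⟨D, hD, m, hB⟩, hcop, hxeq⟩ := hx
    obtain ⟨c', hc'⟩ := QuotientGroup.mk_surjective C
    obtain ⟨c, hc, zc, hzc, hceq⟩ := ih c' (by rw [hc']; exact hC)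
    have hπc : ((c : G) : G ⧸ N) = C := by
      rw [← hc', hceq]
      simp [QuotientGroup.eq, hN.mem_comm_iff, mul_assoc, hzc]
    obtain ⟨d', hd'⟩ := QuotientGroup.mk_surjective D
    obtain ⟨d, hd, zd, hzd, hdeq⟩ := ih d' (by rw [hd']; exact hD)
    have hπd : ((d : G) : G ⧸ N) = D := by
      rw [← hd', hdeq]
      simp [QuotientGroup.eq, hN.mem_comm_iff, mul_assoc, hzd]
    haveI := hN
    obtain ⟨s, hs1, hs2⟩ := exists_pow_lift N (c ^ n)
    obtain ⟨t, ht1, ht2⟩ := exists_pow_lift N (d ^ m)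
    set a := (c ^ n) ^ s with ha
    set b := (d ^ m) ^ t with hb
    have hπa : ((a : G) : G ⧸ N) = A := by
      rw [ha]; rw [hs1, hA, ← hπc]; rfl
    have hπb : ((b : G) : G ⧸ N) = B := by
      rw [hb]; rw [ht1, hB, ← hπd]; rfl
    have hordA : orderOf ((c ^ n : G) : G ⧸ N) = orderOf A := by
      rw [show ((c ^ n : G) : G ⧸ N) = A by rw [hA, ← hπc]; rfl]
    have hordB : orderOf ((d ^ m : G) : G ⧸ N) = orderOf B := by
      rw [show ((d ^ m : G) : G ⧸ N) = B by rw [hB, ← hπd]; rfl]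
    have hcop' : Nat.Coprime (orderOf a) (orderOf b) := by
      apply Nat.Coprime.coprime_dvd_left (hordA ▸ hs2)
      apply Nat.Coprime.coprime_dvd_right (hordB ▸ ht2)
      exact Nat.Coprime.pow _ _ hcop
    refine ⟨a⁻¹ * b⁻¹ * a * b, ⟨a, b, ⟨c, hc, n * s, by rw [pow_mul]⟩,
      ⟨d, hd, m * t, by rw [pow_mul]⟩, hcop', rfl⟩, (a⁻¹ * b⁻¹ * a * b)⁻¹ * x, ?_, by group⟩
    rw [← QuotientGroup.eq]
    simp only [QuotientGroup.mk_mul, QuotientGroup.mk_inv]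
    rw [hπa, hπb, hxeq]
end
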